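/- arXiv:2412.12999 — 3 statements merged into one kernel-verified Lean document; each statement's English description precedes it below -/
import Mathlib

section
/- In the decreasing Cantor set construction from a positive non-increasing summable sequence a, any set U with |U| ≤ s_{t} (where s_{t+1} < |U| ≤ s_t) can intersect at most 4 of the closed intervals of step t−1, and consequently at most 8 of the closed intervals of step t. -/
open Filter Set Topology

/-- Number of closed balls of radius `δ` needed to cover `F`. -/
noncomputable def coverNum (F : Set ℝ) (δ : ℝ) : ℕ :=
  sInf {n : ℕ | ∃ S : Finset ℝ, S.card = n ∧ F ⊆ ⋃ x ∈ S, Metric.closedBall x δ}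

/-- Upper box-counting dimension. -/
noncomputable def upperBoxDim (F : Set ℝ) : ℝ :=
  limsup (fun δ : ℝ => Real.log (coverNum F δ) / -Real.log δ) (nhdsWithin 0 (Set.Ioi 0))

/-- Lower box-counting dimension. -/
noncomputable def lowerBoxDim (F : Set ℝ) : ℝ :=
  liminf (fun δ : ℝ => Real.log (coverNum F δ) / -Real.log δ) (nhdsWithin 0 (Set.Ioi 0))

/-- Assouad dimension. -/
noncomputable def assouadDim (E : Set ℝ) : ℝ :=
  sInf {α : ℝ | ∃ c > (0:ℝ), ∃ ρ > (0:ℝ), ∀ x ∈ E, ∀ r R : ℝ, 0 < r → r < R → R < ρ →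
    (coverNum (Metric.ball x R ∩ E) r : ℝ) ≤ c * (R / r) ^ α}

/-- Lower (Assouad) dimension. -/
noncomputable def lowerAssouadDim (E : Set ℝ) : ℝ :=
  sSup {α : ℝ | ∃ c > (0:ℝ), ∃ ρ > (0:ℝ), ∀ x ∈ E, ∀ r R : ℝ, 0 < r → r < R → R < ρ →
    c * (R / r) ^ α ≤ (coverNum (Metric.ball x R ∩ E) r : ℝ)}

/-- Upper θ-intermediate dimension (with the convention that at θ = 0 it is the
Hausdorff dimension). -/
noncomputable def upperIntDim (θ : ℝ) (F : Set ℝ) : ℝ :=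
  if θ = 0 then (dimH F).toReal else
  sInf {s : ℝ | 0 ≤ s ∧ ∀ ε > (0:ℝ), ∃ δ₀ > (0:ℝ), ∀ δ : ℝ, 0 < δ → δ ≤ δ₀ →
    ∃ (I : Finset ℕ) (U : ℕ → Set ℝ), (F ⊆ ⋃ i ∈ I, U i) ∧
      (∀ i ∈ I, δ ^ (1 / θ) ≤ Metric.diam (U i) ∧ Metric.diam (U i) ≤ δ) ∧
      ∑ i ∈ I, Metric.diam (U i) ^ s ≤ ε}

/-- Lower θ-intermediate dimension (with the convention that at θ = 0 it is the
Hausdorff dimension). -/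
noncomputable def lowerIntDim (θ : ℝ) (F : Set ℝ) : ℝ :=
  if θ = 0 then (dimH F).toReal else
  sInf {s : ℝ | 0 ≤ s ∧ ∀ ε > (0:ℝ), ∀ δ₀ > (0:ℝ), ∃ δ : ℝ, 0 < δ ∧ δ ≤ δ₀ ∧
    ∃ (I : Finset ℕ) (U : ℕ → Set ℝ), (F ⊆ ⋃ i ∈ I, U i) ∧
      (∀ i ∈ I, δ ^ (1 / θ) ≤ Metric.diam (U i) ∧ Metric.diam (U i) ≤ δ) ∧
      ∑ i ∈ I, Metric.diam (U i) ^ s ≤ ε}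

/-- tails `x_n = ∑_{i=n}^∞ a_i` (the sequence `a` is indexed from 1;
the value `a 0` is irrelevant). -/
noncomputable def xseq (a : ℕ → ℝ) (n : ℕ) : ℝ := ∑' i : ℕ, a (n + i)

/-- `s_n = 2^{-n} x_{2^n}`. -/
noncomputable def sseq (a : ℕ → ℝ) (n : ℕ) : ℝ := xseq a (2 ^ n) / 2 ^ n

/-- `r_n = 2^{-n} ∑_{i=2^n}^{2^{n+1}-1} a_i`. -/
noncomputable def rseq (a : ℕ → ℝ) (n : ℕ) : ℝ :=
  (∑ i ∈ Finset.range (2 ^ n), a (2 ^ n + i)) / 2 ^ n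

/-- The countable complementary set `D_a = {x_k : k ≥ 1} ∪ {0}`. -/
noncomputable def Da (a : ℕ → ℝ) : Set ℝ := {0} ∪ {y : ℝ | ∃ k ≥ 1, y = xseq a k}

/-- Length of the interval corresponding to node `m` (in binary-tree indexing, root `1`)
in the construction of the decreasing Cantor set: the sum of the gaps in the subtree of `m`. -/
noncomputable def clen (a : ℕ → ℝ) (m : ℕ) : ℝ :=
  ∑' k : ℕ, ∑ i ∈ Finset.range (2 ^ k), a (2 ^ k * m + i)

/-- Left endpoint of the interval corresponding to node `m`. -/
noncomputable def lft (a : ℕ → ℝ) : ℕ → ℝ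
  | 0 => 0
  | 1 => 0
  | n + 2 =>
    if (n + 2) % 2 = 0 then lft a ((n + 2) / 2)
    else lft a ((n + 2) / 2) + clen a (n + 1) + a ((n + 2) / 2)
termination_by n => n
decreasing_by all_goals omega

/-- The closed interval corresponding to node `m`:  node `2^n + j - 1` is the
interval `I_{n,j}` of step `n`, for `1 ≤ j ≤ 2^n`. -/
noncomputable def node (a : ℕ → ℝ) (m : ℕ) : Set ℝ := Set.Icc (lft a m) (lft a m + clen a m)

/-- The decreasing Cantor set `C_a` associated with the sequence `a`. -/
noncomputable def cantorSetOf (a : ℕ → ℝ) : Set ℝ :=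
  ⋂ n : ℕ, ⋃ j ∈ Finset.Icc 1 (2 ^ n), node a (2 ^ n + j - 1)

/-- `E` is a complementary set of the sequence `a`: a closed subset of `[0,1]`
whose complement in `[0,1]` is a disjoint union of open intervals of lengths `a_1, a_2, …`. -/
def IsComplSet (a : ℕ → ℝ) (E : Set ℝ) : Prop :=
  ∃ g : ℕ → ℝ,
    (∀ n ≥ 1, Set.Ioo (g n) (g n + a n) ⊆ Set.Icc 0 1) ∧
    (∀ m ≥ 1, ∀ n ≥ 1, m ≠ n →
      Disjoint (Set.Ioo (g m) (g m + a m)) (Set.Ioo (g n) (g n + a n))) ∧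
    E = Set.Icc 0 1 \ ⋃ n ∈ {k : ℕ | 1 ≤ k}, Set.Ioo (g n) (g n + a n)

/-- `γ_{θ,a}(r) = max{ m : s_m ≥ s_r^{1/θ} }`. -/
noncomputable def gammaIdx (a : ℕ → ℝ) (θ : ℝ) (r : ℕ) : ℕ :=
  sSup {m : ℕ | sseq a r ^ (1 / θ) ≤ sseq a m}


/-!
A node `m` of step `n` (`2 ^ n ≤ m < 2 ^ (n + 1)`) has length `clen a m ≥ s_{n+1}`, by Cauchy
condensation, and consecutive nodes of one step are separated by positive gaps. So a set meeting
two nodes of step `n` with a third one strictly between them has diameter greater than `s_{n+1}`: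
a set `U` with `|U| ≤ s_t` meets at most two nodes of step `t - 1`, hence at most four of step `t`.
-/

namespace DecreasingCantor

open Finset

variable {a : ℕ → ℝ}

/-- The descendants of node `m` at depth `k` are the nodes `2 ^ k * m + i`, `i < 2 ^ k`. -/
noncomputable def levelGapSum (a : ℕ → ℝ) (k m : ℕ) : ℝ :=
  ∑ i ∈ range (2 ^ k), a (2 ^ k * m + i)

lemma clen_eq_tsum_levelGapSum (m : ℕ) : clen a m = ∑' k, levelGapSum a k m := rfl

lemma levelGapSum_eq_sum_Ico (k m : ℕ) :
    levelGapSum a k m = ∑ i ∈ Ico (2 ^ k * m) (2 ^ k * m + 2 ^ k), a i := by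
  rw [sum_Ico_eq_sum_range, Nat.add_sub_cancel_left, levelGapSum]

lemma levelGapSum_nonneg (hpos : ∀ n ≥ 1, 0 < a n) {m : ℕ} (hm : 1 ≤ m) (k : ℕ) :
    0 ≤ levelGapSum a k m :=
  sum_nonneg fun i _ => (hpos _ (le_add_right (Nat.one_le_iff_ne_zero.2
    (mul_ne_zero (pow_ne_zero _ two_ne_zero) (by omega))))).le

lemma levelGapSum_succ (k m : ℕ) :
    levelGapSum a (k + 1) m = levelGapSum a k (2 * m) + levelGapSum a k (2 * m + 1) := by
  have hmid : 2 ^ k * (2 * m) + 2 ^ k = 2 ^ k * (2 * m + 1) := by ring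
  have hlo : 2 ^ k * (2 * m) = 2 ^ (k + 1) * m := by ring
  have hhi : 2 ^ k * (2 * m + 1) + 2 ^ k = 2 ^ (k + 1) * m + 2 ^ (k + 1) := by ring
  have hle : 2 ^ (k + 1) * m ≤ 2 ^ k * (2 * m + 1) := hlo ▸ Nat.mul_le_mul_left _ (by omega)
  simp only [levelGapSum_eq_sum_Ico]
  rw [hmid, hlo, ← hhi]
  exact (sum_Ico_consecutive _ hle (by omega)).symm

lemma summable_nat_add_of_one_le (hsumm : Summable fun n => a (n + 1)) {N : ℕ} (hN : 1 ≤ N) :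
    Summable fun i => a (N + i) := by
  obtain ⟨k, rfl⟩ : ∃ k, N = k + 1 := ⟨N - 1, by omega⟩
  exact ((summable_nat_add_iff k).mpr hsumm).congr fun i => congr_arg a (by ring)

lemma sum_Ico_le_xseq (hpos : ∀ n ≥ 1, 0 < a n) (hsumm : Summable fun n => a (n + 1))
    {m : ℕ} (hm : 1 ≤ m) (X : ℕ) : ∑ i ∈ Ico m X, a i ≤ xseq a m := by
  rw [sum_Ico_eq_sum_range]
  exact (summable_nat_add_of_one_le hsumm hm).sum_le_tsum _
    fun i _ => (hpos (m + i) (by omega)).le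

lemma sum_range_levelGapSum_le (hpos : ∀ n ≥ 1, 0 < a n) {m : ℕ} (hm : 1 ≤ m) (K : ℕ) :
    ∑ k ∈ range K, levelGapSum a k m ≤ ∑ i ∈ Ico m (2 ^ K * m), a i := by
  induction K with
  | zero => simp
  | succ K ih =>
    have hstart : m ≤ 2 ^ K * m := Nat.le_mul_of_pos_left m (Nat.two_pow_pos K)
    have hend : 2 ^ K * m + 2 ^ K ≤ 2 ^ (K + 1) * m := by
      rw [pow_succ]; nlinarith [Nat.two_pow_pos K]
    calc ∑ k ∈ range (K + 1), levelGapSum a k m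
        ≤ ∑ i ∈ Ico m (2 ^ K * m), a i + ∑ i ∈ Ico (2 ^ K * m) (2 ^ K * m + 2 ^ K), a i := by
          rw [sum_range_succ, levelGapSum_eq_sum_Ico]; gcongr
      _ = ∑ i ∈ Ico m (2 ^ K * m + 2 ^ K), a i :=
          sum_Ico_consecutive _ hstart (Nat.le_add_right _ _)
      _ ≤ ∑ i ∈ Ico m (2 ^ (K + 1) * m), a i :=
          sum_le_sum_of_subset_of_nonneg (Ico_subset_Ico_right hend)
            fun i hi _ => (hpos i (by simp only [Finset.mem_Ico] at hi; omega)).le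

lemma summable_levelGapSum (hpos : ∀ n ≥ 1, 0 < a n) (hsumm : Summable fun n => a (n + 1))
    {m : ℕ} (hm : 1 ≤ m) : Summable fun k => levelGapSum a k m :=
  summable_of_sum_range_le (levelGapSum_nonneg hpos hm)
    fun K => (sum_range_levelGapSum_le hpos hm K).trans (sum_Ico_le_xseq hpos hsumm hm _)

lemma clen_nonneg (hpos : ∀ n ≥ 1, 0 < a n) {m : ℕ} (hm : 1 ≤ m) : 0 ≤ clen a m :=
  tsum_nonneg (levelGapSum_nonneg hpos hm)

lemma clen_eq_add (hpos : ∀ n ≥ 1, 0 < a n) (hsumm : Summable fun n => a (n + 1))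
    {m : ℕ} (hm : 1 ≤ m) : clen a m = a m + clen a (2 * m) + clen a (2 * m + 1) := by
  rw [clen_eq_tsum_levelGapSum, (summable_levelGapSum hpos hsumm hm).tsum_eq_zero_add,
    tsum_congr fun k => levelGapSum_succ k m,
    (summable_levelGapSum hpos hsumm (by omega)).tsum_add
      (summable_levelGapSum hpos hsumm (by omega))]
  simp [levelGapSum, clen_eq_tsum_levelGapSum, add_assoc]

lemma sseq_nonneg (hpos : ∀ n ≥ 1, 0 < a n) (c : ℕ) : 0 ≤ sseq a c :=
  div_nonneg (tsum_nonneg fun i => (hpos _ (Nat.one_le_two_pow.trans (Nat.le_add_right _ i))).le)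
    (by positivity)

lemma pow_mul_le_levelGapSum (hmono : ∀ n ≥ 1, a (n + 1) ≤ a n) {c m : ℕ} (hm : 1 ≤ m)
    (hmc : m < 2 ^ c) (k : ℕ) : 2 ^ k * a (2 ^ (c + k)) ≤ levelGapSum a k m := by
  have hanti := antitoneOn_nat_Ici_of_succ_le hmono
  have hend : 2 ^ k * m + 2 ^ k ≤ 2 ^ (c + k) := by
    rw [pow_add]; nlinarith [Nat.two_pow_pos k]
  have h := card_nsmul_le_sum (range (2 ^ k)) (fun i => a (2 ^ k * m + i)) (a (2 ^ (c + k)))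
    fun i hi => hanti (show 1 ≤ 2 ^ k * m + i by nlinarith [Nat.two_pow_pos k])
      (show 1 ≤ 2 ^ (c + k) from Nat.one_le_two_pow) (by simp only [Finset.mem_range] at hi; omega)
  simpa [levelGapSum, nsmul_eq_mul] using h

/-- Cauchy condensation bounds the tail `x_{2^c}` by `∑ₖ 2^(c+k) a_{2^(c+k)}`, which is compared
termwise with `2^c * clen a m` by `pow_mul_le_levelGapSum`. -/
lemma sseq_le_clen (hpos : ∀ n ≥ 1, 0 < a n) (hmono : ∀ n ≥ 1, a (n + 1) ≤ a n)
    (hsumm : Summable fun n => a (n + 1)) {c m : ℕ} (hm : 1 ≤ m) (hmc : m < 2 ^ c) :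
    sseq a c ≤ clen a m := by
  have hanti := antitoneOn_nat_Ici_of_succ_le hmono
  rw [sseq, div_le_iff₀' (by positivity)]
  refine Real.tsum_le_of_sum_range_le (fun i => (hpos _ (by omega)).le) fun M => ?_
  have hM : 2 ^ c + M ≤ 2 ^ (c + M) := by
    rw [pow_add]; nlinarith [Nat.lt_two_pow_self (n := M), Nat.two_pow_pos c]
  calc ∑ i ∈ range M, a (2 ^ c + i)
      = ∑ i ∈ Ico (2 ^ c) (2 ^ c + M), a i := by rw [sum_Ico_eq_sum_range, Nat.add_sub_cancel_left]
    _ ≤ ∑ i ∈ Ico (2 ^ c) (2 ^ (c + M)), a i :=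
        sum_le_sum_of_subset_of_nonneg (Ico_subset_Ico_right hM)
          fun i hi _ => (hpos i (by simp only [Finset.mem_Ico] at hi; omega)).le
    _ ≤ ∑ k ∈ range M, (2 ^ (c + (k + 1)) - 2 ^ (c + k)) • a (2 ^ (c + k)) :=
        le_sum_schlomilch' (u := fun k => 2 ^ (c + k))
          (fun i j hi hij => hanti hi (hi.trans_le hij) hij)
          (fun k => Nat.two_pow_pos _) (fun k l hkl => Nat.pow_le_pow_right two_pos (by omega)) M
    _ = ∑ k ∈ range M, 2 ^ c * (2 ^ k * a (2 ^ (c + k))) := by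
        refine sum_congr rfl fun k _ => ?_
        rw [show 2 ^ (c + (k + 1)) - 2 ^ (c + k) = 2 ^ (c + k) by rw [← add_assoc, pow_succ]; omega,
          nsmul_eq_mul, pow_add]
        push_cast; ring
    _ ≤ ∑ k ∈ range M, 2 ^ c * levelGapSum a k m := by
        gcongr with k; exact pow_mul_le_levelGapSum hmono hm hmc k
    _ ≤ 2 ^ c * clen a m := by
        rw [← mul_sum]
        gcongr
        exact (summable_levelGapSum hpos hsumm hm).sum_le_tsum _
          fun k _ => levelGapSum_nonneg hpos hm k

lemma lft_two_mul {m : ℕ} (hm : 1 ≤ m) : lft a (2 * m) = lft a m := by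
  obtain ⟨p, rfl⟩ : ∃ p, m = p + 1 := ⟨m - 1, by omega⟩
  rw [show 2 * (p + 1) = 2 * p + 2 by ring, lft, if_pos (by omega)]
  congr 1; omega

lemma lft_two_mul_add_one {m : ℕ} (hm : 1 ≤ m) :
    lft a (2 * m + 1) = lft a m + clen a (2 * m) + a m := by
  obtain ⟨p, rfl⟩ : ∃ p, m = p + 1 := ⟨m - 1, by omega⟩
  rw [show 2 * (p + 1) + 1 = 2 * p + 1 + 2 by ring, lft, if_neg (by omega),
    show (2 * p + 1 + 2) / 2 = p + 1 by omega, show 2 * p + 1 + 1 = 2 * (p + 1) by ring]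

lemma lft_add_clen_two_mul_add_one (hpos : ∀ n ≥ 1, 0 < a n)
    (hsumm : Summable fun n => a (n + 1)) {m : ℕ} (hm : 1 ≤ m) :
    lft a (2 * m + 1) + clen a (2 * m + 1) = lft a m + clen a m := by
  rw [lft_two_mul_add_one hm, clen_eq_add hpos hsumm hm]
  ring

lemma node_subset_node_div_two (hpos : ∀ n ≥ 1, 0 < a n) (hsumm : Summable fun n => a (n + 1))
    {m : ℕ} (hm : 2 ≤ m) : node a m ⊆ node a (m / 2) := by
  have hp : 1 ≤ m / 2 := by omega
  have hgap := (hpos _ hp).le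
  rcases Nat.even_or_odd' m with ⟨p, rfl | rfl⟩
  · have hright := clen_nonneg hpos (show 1 ≤ 2 * p + 1 by omega)
    rw [show 2 * p / 2 = p by omega] at hp hgap ⊢
    refine Icc_subset_Icc (lft_two_mul hp).ge ?_
    rw [lft_two_mul hp, clen_eq_add hpos hsumm hp]
    linarith
  · have hleft := clen_nonneg hpos (show 1 ≤ 2 * p by omega)
    rw [show (2 * p + 1) / 2 = p by omega] at hp hgap ⊢
    refine Icc_subset_Icc ?_ (lft_add_clen_two_mul_add_one hpos hsumm hp).le
    rw [lft_two_mul_add_one hp]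
    linarith

/-- Consecutive nodes of one step are separated by a gap: either the gap `a p` between the two
children of `p`, or, inductively, a gap of the previous step. -/
lemma lft_add_clen_lt_lft_succ (hpos : ∀ n ≥ 1, 0 < a n) (hsumm : Summable fun n => a (n + 1)) :
    ∀ {n m : ℕ}, 2 ^ n ≤ m → m + 1 < 2 ^ (n + 1) → lft a m + clen a m < lft a (m + 1)
  | 0, m, h1, h2 => by omega
  | n + 1, m, h1, h2 => by
    rw [pow_succ] at h1 h2
    rcases Nat.even_or_odd' m with ⟨p, rfl | rfl⟩
    · have hp : 1 ≤ p := by have := Nat.two_pow_pos n; omega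
      rw [lft_two_mul hp, lft_two_mul_add_one hp]
      linarith [hpos p hp]
    · have hp : 1 ≤ p := by have := Nat.two_pow_pos n; omega
      rw [lft_add_clen_two_mul_add_one hpos hsumm hp, show 2 * p + 1 + 1 = 2 * (p + 1) by ring,
        lft_two_mul (by omega)]
      exact lft_add_clen_lt_lft_succ hpos hsumm (n := n) (by omega) (by rw [pow_succ]; omega)

lemma lft_add_clen_lt_lft (hpos : ∀ n ≥ 1, 0 < a n) (hsumm : Summable fun n => a (n + 1))
    {n m₁ m₂ : ℕ} (h₁ : 2 ^ n ≤ m₁) (h₁₂ : m₁ < m₂) (h₂ : m₂ < 2 ^ (n + 1)) :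
    lft a m₁ + clen a m₁ < lft a m₂ := by
  induction m₂, h₁₂ using Nat.le_induction with
  | base => exact lft_add_clen_lt_lft_succ hpos hsumm h₁ h₂
  | succ m hm ih =>
    have hm1 : 1 ≤ m := Nat.one_le_two_pow.trans (h₁.trans (by omega))
    linarith [ih (by omega), clen_nonneg hpos hm1,
      lft_add_clen_lt_lft_succ hpos hsumm (h₁.trans (by omega)) h₂]

lemma sseq_lt_sub_of_mem_node (hpos : ∀ n ≥ 1, 0 < a n) (hmono : ∀ n ≥ 1, a (n + 1) ≤ a n)
    (hsumm : Summable fun n => a (n + 1)) {n m₁ m₂ : ℕ} (h₁ : 2 ^ n ≤ m₁) (h₁₂ : m₁ + 1 < m₂)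
    (h₂ : m₂ < 2 ^ (n + 1)) {p q : ℝ} (hp : p ∈ node a m₁) (hq : q ∈ node a m₂) :
    sseq a (n + 1) < q - p := by
  have hmid : sseq a (n + 1) ≤ clen a (m₁ + 1) :=
    sseq_le_clen hpos hmono hsumm (by omega) (by omega)
  have hleft : lft a m₁ + clen a m₁ < lft a (m₁ + 1) :=
    lft_add_clen_lt_lft hpos hsumm h₁ (lt_add_one m₁) (by omega)
  have hright : lft a (m₁ + 1) + clen a (m₁ + 1) < lft a m₂ :=
    lft_add_clen_lt_lft hpos hsumm (by omega) h₁₂ h₂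
  linarith [hp.2, hq.1]

open Classical in
noncomputable def meetingNodes (a : ℕ → ℝ) (n : ℕ) (U : Set ℝ) : Finset ℕ :=
  {m ∈ Ico (2 ^ n) (2 ^ (n + 1)) | (U ∩ node a m).Nonempty}

open Classical in
lemma mem_meetingNodes {n m : ℕ} {U : Set ℝ} :
    m ∈ meetingNodes a n U ↔ (2 ^ n ≤ m ∧ m < 2 ^ (n + 1)) ∧ (U ∩ node a m).Nonempty := by
  rw [meetingNodes, Finset.mem_filter, Finset.mem_Ico]

lemma card_meetingNodes_le_two (hpos : ∀ n ≥ 1, 0 < a n) (hmono : ∀ n ≥ 1, a (n + 1) ≤ a n)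
    (hsumm : Summable fun n => a (n + 1)) {n : ℕ} {U : Set ℝ} (hU : Bornology.IsBounded U)
    (hdiam : Metric.diam U ≤ sseq a (n + 1)) : #(meetingNodes a n U) ≤ 2 := by
  set S := meetingNodes a n U
  rcases S.eq_empty_or_nonempty with hS | hS
  · simp [hS]
  suffices S ⊆ Icc (S.min' hS) (S.min' hS + 1) by
    simpa [add_assoc] using Finset.card_le_card this
  intro m hm
  refine Finset.mem_Icc.2 ⟨S.min'_le m hm, not_lt.1 fun hlt => ?_⟩
  obtain ⟨⟨h₁, -⟩, p, hpU, hp⟩ := mem_meetingNodes.1 (S.min'_mem hS)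
  obtain ⟨⟨-, h₂⟩, q, hqU, hq⟩ := mem_meetingNodes.1 hm
  have hsep := sseq_lt_sub_of_mem_node hpos hmono hsumm h₁ hlt h₂ hp hq
  linarith [le_abs_self (q - p), Metric.dist_le_diam_of_mem hU hqU hpU, Real.dist_eq q p]

lemma card_meetingNodes_succ_le (hpos : ∀ n ≥ 1, 0 < a n) (hsumm : Summable fun n => a (n + 1))
    (n : ℕ) (U : Set ℝ) : #(meetingNodes a (n + 1) U) ≤ 2 * #(meetingNodes a n U) := by
  refine card_le_mul_card_image_of_maps_to (f := (· / 2)) (fun m hm => ?_) 2 fun p _ => ?_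
  · obtain ⟨⟨h₁, h₂⟩, x, hxU, hx⟩ := mem_meetingNodes.1 hm
    rw [pow_succ] at h₁ h₂
    have hm2 : 2 ≤ m := by have := Nat.two_pow_pos n; omega
    exact mem_meetingNodes.2
      ⟨⟨by omega, by rw [pow_succ]; omega⟩, x, hxU, node_subset_node_div_two hpos hsumm hm2 hx⟩
  · calc #{m ∈ meetingNodes a (n + 1) U | m / 2 = p}
        ≤ #({2 * p, 2 * p + 1} : Finset ℕ) :=
          card_le_card fun m hm => by
            rw [Finset.mem_filter] at hm
            rw [Finset.mem_insert, Finset.mem_singleton]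
            omega
      _ ≤ 2 := card_le_two

open Classical in
lemma card_meetingNodes_eq (n : ℕ) (U : Set ℝ) :
    #(meetingNodes a n U) = #{j ∈ Icc 1 (2 ^ n) | (U ∩ node a (2 ^ n + j - 1)).Nonempty} := by
  have hsplit : 2 ^ (n + 1) = 2 ^ n + 2 ^ n := by rw [pow_succ]; omega
  refine card_nbij' (· + 1 - 2 ^ n) (2 ^ n + · - 1) (fun m hm => ?_) (fun j hj => ?_)
    (fun m hm => ?_) (fun j hj => ?_)
  · rw [Finset.mem_coe, mem_meetingNodes] at hm
    dsimp only
    rw [Finset.mem_coe, Finset.mem_filter, Finset.mem_Icc,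
      show 2 ^ n + (m + 1 - 2 ^ n) - 1 = m by omega]
    exact ⟨by omega, hm.2⟩
  · rw [Finset.mem_coe, Finset.mem_filter, Finset.mem_Icc] at hj
    dsimp only
    rw [Finset.mem_coe, mem_meetingNodes]
    exact ⟨by omega, hj.2⟩
  · rw [Finset.mem_coe, mem_meetingNodes] at hm
    dsimp only; omega
  · rw [Finset.mem_coe, Finset.mem_filter, Finset.mem_Icc] at hj
    dsimp only; omega

end DecreasingCantor

open Classical in
theorem intersect_at_most_general (a : ℕ → ℝ) (hpos : ∀ n ≥ 1, 0 < a n) (hmono : ∀ n ≥ 1, a (n + 1) ≤ a n)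
    (hsumm : Summable fun n => a (n + 1))
    (t : ℕ) (ht : 1 ≤ t) (U : Set ℝ)
    (hU₁ : sseq a (t + 1) < Metric.diam U) (hU₂ : Metric.diam U ≤ sseq a t) :
    ((Finset.Icc 1 (2 ^ (t - 1))).filter
        (fun j => (U ∩ node a (2 ^ (t - 1) + j - 1)).Nonempty)).card ≤ 4 ∧
    ((Finset.Icc 1 (2 ^ t)).filter
        (fun j => (U ∩ node a (2 ^ t + j - 1)).Nonempty)).card ≤ 8 := by
  open DecreasingCantor in
  obtain ⟨n, rfl⟩ : ∃ n, t = n + 1 := ⟨t - 1, by omega⟩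
  have hbdd : Bornology.IsBounded U := by
    by_contra h
    rw [Metric.diam_eq_zero_of_unbounded h] at hU₁
    linarith [sseq_nonneg hpos (n + 1 + 1)]
  have h₂ := card_meetingNodes_le_two hpos hmono hsumm hbdd hU₂
  have h₄ := card_meetingNodes_succ_le hpos hsumm n U
  rw [Nat.add_sub_cancel, ← card_meetingNodes_eq, ← card_meetingNodes_eq]
  omega

open Classical in
/-- A set `U` with `s_{t+1} < |U| ≤ s_t` meets at most 4 of the step-`(t-1)` intervals
and at most 8 of the step-`t` intervals of the decreasing Cantor set construction. -/
theorem intersect_at_most (a : ℕ → ℝ) (hpos : ∀ n ≥ 1, 0 < a n) (hmono : ∀ n ≥ 1, a (n + 1) ≤ a n)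
    (hsumm : Summable fun n => a (n + 1)) (htot : ∑' n : ℕ, a (n + 1) = 1)
    (t : ℕ) (ht : 1 ≤ t) (U : Set ℝ)
    (hU₁ : sseq a (t + 1) < Metric.diam U) (hU₂ : Metric.diam U ≤ sseq a t) :
    ((Finset.Icc 1 (2 ^ (t - 1))).filter
        (fun j => (U ∩ node a (2 ^ (t - 1) + j - 1)).Nonempty)).card ≤ 4 ∧
    ((Finset.Icc 1 (2 ^ t)).filter
        (fun j => (U ∩ node a (2 ^ t + j - 1)).Nonempty)).card ≤ 8 :=
  intersect_at_most_general a hpos hmono hsumm t ht U hU₁ hU₂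
end

section
/- Let a = {a_n} be a positive non-increasing summable sequence with sum 1 and E ∈ 𝒞_a any complementary set (a closed subset of [0,1] whose complement is a disjoint union of open intervals of lengths a_1, a_2, ...). Then for all θ ∈ [0,1], \overline{dim}_θ D_a ≤ \overline{dim}_θ E and \underline{dim}_θ D_a ≤ \underline{dim}_θ E. -/
open Filter Set Topology

/-!
For `θ = 0` both sides are Hausdorff dimensions and `D_a` is countable. For `θ > 0` and
`s ≤ 1`, take a cover of `E` by `N` sets with diameters in `[δ^{1/θ}, δ]`. At most `N` gaps of `E`
meet the union of the convex hulls of these sets without lying inside it: two such gaps whose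
right endpoints (points of `E`) lie in the same hull would force that hull to contain the later
gap. Comparing Lebesgue measure on `[0,1]` and using that the gap lengths decrease gives
`x_{N+1} ≤ ∑ |U_i|`. So `D_a` is covered at comparable cost by `N` intervals of length `δ^{1/θ}`
at `x_1, …, x_N` together with a tiling of `[0, x_{N+1}]` by intervals of the largest diameter
`D` in the cover, which costs about `x_{N+1} D^{s-1} + D^s ≤ ∑ |U_i|^s + D^s`. For `s > 1` every
subset of `[0,1]` has arbitrarily cheap covers.
-/

open MeasureTheory Metric

section Tails

variable {a : ℕ → ℝ}

lemma sum_range_add_xseq (hsumm : Summable fun n => a (n + 1))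
    (htot : ∑' n : ℕ, a (n + 1) = 1) (m : ℕ) :
    ∑ i ∈ Finset.range m, a (i + 1) + xseq a (m + 1) = 1 := by
  rw [← htot, ← hsumm.sum_add_tsum_nat_add m, xseq]
  congr 1
  exact tsum_congr fun i => by ring_nf

lemma xseq_nonneg (hpos : ∀ n ≥ 1, 0 < a n) {k : ℕ} (hk : 1 ≤ k) : 0 ≤ xseq a k :=
  tsum_nonneg fun i => (hpos (k + i) (by omega)).le

lemma xseq_succ_le_xseq_succ (hpos : ∀ n ≥ 1, 0 < a n) (hsumm : Summable fun n => a (n + 1))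
    (htot : ∑' n : ℕ, a (n + 1) = 1) {m k : ℕ} (hmk : m ≤ k) :
    xseq a (k + 1) ≤ xseq a (m + 1) := by
  have hm := sum_range_add_xseq hsumm htot m
  have hk := sum_range_add_xseq hsumm htot k
  have : ∑ i ∈ Finset.range m, a (i + 1) ≤ ∑ i ∈ Finset.range k, a (i + 1) :=
    Finset.sum_le_sum_of_subset_of_nonneg (Finset.range_mono hmk)
      fun i _ _ => (hpos (i + 1) (by omega)).le
  linarith

lemma Da_subset_Icc (hpos : ∀ n ≥ 1, 0 < a n) (hsumm : Summable fun n => a (n + 1))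
    (htot : ∑' n : ℕ, a (n + 1) = 1) : Da a ⊆ Icc 0 1 := by
  rintro y (rfl | ⟨k, hk, rfl⟩)
  · exact ⟨le_rfl, zero_le_one⟩
  · obtain ⟨k, rfl⟩ := Nat.exists_eq_add_of_le' hk
    have hx1 : xseq a 1 = 1 := by simpa using sum_range_add_xseq hsumm htot 0
    exact ⟨xseq_nonneg hpos hk, hx1 ▸ xseq_succ_le_xseq_succ hpos hsumm htot (Nat.zero_le k)⟩

lemma Da_countable (a : ℕ → ℝ) : (Da a).Countable :=
  (countable_singleton 0).union <| (countable_range (xseq a)).mono <| by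
    rintro _ ⟨k, -, rfl⟩
    exact ⟨k, rfl⟩

end Tails

lemma sum_le_sum_range_card {f : ℕ → ℝ} (hf : AntitoneOn f (Ici 1)) {K : Finset ℕ}
    (hK : ∀ k ∈ K, 1 ≤ k) : ∑ k ∈ K, f k ≤ ∑ i ∈ Finset.range K.card, f (i + 1) := by
  induction K using Finset.induction_on_max with
  | empty => simp
  | insert b K hb ih =>
    have hbK : b ∉ K := fun h => (hb b h).false
    have hcard : K.card + 1 ≤ b := by
      have hsub := Finset.card_le_card (s := K) (t := Finset.Ico 1 b)
        fun k hk => Finset.mem_Ico.2 ⟨hK k (by simp [hk]), hb k hk⟩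
      rw [Nat.card_Ico] at hsub
      have := hK b (by simp)
      omega
    rw [Finset.sum_insert hbK, Finset.card_insert_of_notMem hbK, Finset.sum_range_succ, add_comm]
    exact add_le_add (ih fun k hk => hK k (by simp [hk]))
      (hf (mem_Ici.2 (by omega)) (mem_Ici.2 (by omega)) hcard)

def HasIntCover (θ δ s ε : ℝ) (F : Set ℝ) : Prop :=
  ∃ (I : Finset ℕ) (U : ℕ → Set ℝ), (F ⊆ ⋃ i ∈ I, U i) ∧
    (∀ i ∈ I, δ ^ (1 / θ) ≤ diam (U i) ∧ diam (U i) ≤ δ) ∧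
    ∑ i ∈ I, diam (U i) ^ s ≤ ε

namespace HasIntCover

variable {θ δ s ε ε' : ℝ} {F F' : Set ℝ}

lemma empty : HasIntCover θ δ s 0 ∅ :=
  ⟨∅, fun _ => ∅, empty_subset _, by simp, by simp⟩

lemma mono (h : HasIntCover θ δ s ε F) (hF : F' ⊆ F) (hε : ε ≤ ε') :
    HasIntCover θ δ s ε' F' :=
  let ⟨I, U, hcov, hdiam, hsum⟩ := h
  ⟨I, U, hF.trans hcov, hdiam, hsum.trans hε⟩

lemma union (h : HasIntCover θ δ s ε F) (h' : HasIntCover θ δ s ε' F') :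
    HasIntCover θ δ s (ε + ε') (F ∪ F') := by
  obtain ⟨I, U, hcov, hdiam, hsum⟩ := h
  obtain ⟨I', U', hcov', hdiam', hsum'⟩ := h'
  let e := Equiv.natSumNatEquivNat
  refine ⟨(I.disjSum I').map e.toEmbedding, fun n => Sum.elim U U' (e.symm n), ?_, ?_, ?_⟩
  · rintro x (hx | hx)
    · obtain ⟨i, hi, hxi⟩ := mem_iUnion₂.1 (hcov hx)
      exact mem_iUnion₂.2 ⟨e (.inl i), by simpa using hi, by simpa using hxi⟩
    · obtain ⟨i, hi, hxi⟩ := mem_iUnion₂.1 (hcov' hx)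
      exact mem_iUnion₂.2 ⟨e (.inr i), by simpa using hi, by simpa using hxi⟩
  · intro n hn
    obtain ⟨i | i, hi, rfl⟩ := Finset.mem_map.1 hn
    · simpa using hdiam i (by simpa using hi)
    · simpa using hdiam' i (by simpa using hi)
  · rw [Finset.sum_map, Finset.sum_disjSum]
    simpa using add_le_add hsum hsum'

lemma biUnion {ι : Type*} [DecidableEq ι] {ε : ι → ℝ} {F : ι → Set ℝ} (T : Finset ι)
    (h : ∀ k ∈ T, HasIntCover θ δ s (ε k) (F k)) :
    HasIntCover θ δ s (∑ k ∈ T, ε k) (⋃ k ∈ T, F k) := by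
  induction T using Finset.induction_on with
  | empty => simpa using empty
  | insert k T hk ih =>
    rw [Finset.sum_insert hk, Finset.set_biUnion_insert]
    exact (h k (by simp)).union (ih fun j hj => h j (by simp [hj]))

end HasIntCover

section Covers

variable {θ δ s r : ℝ}

lemma hasIntCover_Icc (c : ℝ) (hr0 : 0 ≤ r) (hr : δ ^ (1 / θ) ≤ r) (hrδ : r ≤ δ) :
    HasIntCover θ δ s (r ^ s) (Icc c (c + r)) := by
  have hdiam : diam (Icc c (c + r)) = r := by
    rw [Real.diam_Icc (by linarith), add_sub_cancel_left]
  exact ⟨{0}, fun _ => Icc c (c + r), by simp, fun _ _ => by rw [hdiam]; exact ⟨hr, hrδ⟩,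
    by simp [hdiam]⟩

lemma hasIntCover_image {ι : Type*} [DecidableEq ι] (x : ι → ℝ) (T : Finset ι) (hr0 : 0 ≤ r)
    (hr : δ ^ (1 / θ) ≤ r) (hrδ : r ≤ δ) :
    HasIntCover θ δ s (T.card * r ^ s) (x '' T) := by
  refine (HasIntCover.biUnion T fun k _ => hasIntCover_Icc (x k) hr0 hr hrδ).mono ?_ (by simp)
  rintro _ ⟨k, hk, rfl⟩
  exact mem_iUnion₂.2 ⟨k, hk, left_mem_Icc.2 (by linarith)⟩

lemma hasIntCover_Icc_zero {L : ℝ} (hL : 0 ≤ L) (hr0 : 0 < r) (hr : δ ^ (1 / θ) ≤ r)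
    (hrδ : r ≤ δ) : HasIntCover θ δ s ((L / r + 1) * r ^ s) (Icc 0 L) := by
  refine (HasIntCover.biUnion (Finset.range (⌊L / r⌋₊ + 1))
    fun j _ => hasIntCover_Icc (j * r) hr0.le hr hrδ).mono ?_ ?_
  · intro y ⟨hy0, hyL⟩
    refine mem_iUnion₂.2 ⟨⌊y / r⌋₊, ?_, ?_, ?_⟩
    · exact Finset.mem_range_succ_iff.2 (Nat.floor_le_floor (by gcongr))
    · exact (le_div_iff₀ hr0).1 (Nat.floor_le (by positivity))
    · have := (div_lt_iff₀ hr0).1 (Nat.lt_floor_add_one (y / r))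
      linarith
  · rw [Finset.sum_const, Finset.card_range, nsmul_eq_mul]
    gcongr
    push_cast
    linarith [Nat.floor_le (div_nonneg hL hr0.le)]

end Covers

section IntDim

variable {θ : ℝ}

lemma rpow_one_div_le_self (hθ0 : 0 < θ) (hθ1 : θ ≤ 1) {δ : ℝ} (hδ0 : 0 < δ) (hδ1 : δ ≤ 1) :
    δ ^ (1 / θ) ≤ δ :=
  Real.rpow_le_self_of_le_one hδ0.le hδ1 (by rw [le_div_iff₀ hθ0]; linarith)

lemma exists_hasIntCover_of_subset_Icc {F : Set ℝ} (hF : F ⊆ Icc 0 1) (hθ0 : 0 < θ)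
    (hθ1 : θ ≤ 1) {s ε : ℝ} (hs : 1 < s) (hε : 0 < ε) :
    ∃ δ₀ > 0, ∀ δ : ℝ, 0 < δ → δ ≤ δ₀ → HasIntCover θ δ s ε F := by
  refine ⟨min 1 ((ε / 2) ^ (s - 1)⁻¹), by positivity, fun δ hδ0 hδ => ?_⟩
  have hδ1 : δ ≤ 1 := hδ.trans (min_le_left _ _)
  have hsmall : δ ^ (s - 1) ≤ ε / 2 := by
    calc δ ^ (s - 1) ≤ ((ε / 2) ^ (s - 1)⁻¹) ^ (s - 1) :=
          Real.rpow_le_rpow hδ0.le (hδ.trans (min_le_right _ _)) (by linarith)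
      _ = ε / 2 := Real.rpow_inv_rpow (by positivity) (by linarith)
  have hcost : (1 / δ + 1) * δ ^ s = δ ^ (s - 1) + δ ^ s := by
    rw [Real.rpow_sub_one hδ0.ne']
    field_simp
  refine (hasIntCover_Icc_zero zero_le_one hδ0 (rpow_one_div_le_self hθ0 hθ1 hδ0 hδ1)
    le_rfl).mono hF ?_
  rw [hcost]
  linarith [Real.rpow_le_rpow_of_exponent_ge hδ0 hδ1 (by linarith : s - 1 ≤ s)]

lemma upperIntDim_of_ne_zero (hθ : θ ≠ 0) (F : Set ℝ) :
    upperIntDim θ F = sInf {s : ℝ | 0 ≤ s ∧ ∀ ε > (0:ℝ), ∃ δ₀ > (0:ℝ), ∀ δ : ℝ, 0 < δ → δ ≤ δ₀ →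
      HasIntCover θ δ s ε F} :=
  if_neg hθ

lemma lowerIntDim_of_ne_zero (hθ : θ ≠ 0) (F : Set ℝ) :
    lowerIntDim θ F = sInf {s : ℝ | 0 ≤ s ∧ ∀ ε > (0:ℝ), ∀ δ₀ > (0:ℝ), ∃ δ : ℝ, 0 < δ ∧ δ ≤ δ₀ ∧
      HasIntCover θ δ s ε F} :=
  if_neg hθ

variable {F F' : Set ℝ} {C : ℝ}

lemma upperIntDim_le_of_hasIntCover (hθ0 : 0 < θ) (hθ1 : θ ≤ 1) (hC : 0 < C)
    (hF : F ⊆ Icc 0 1) (hF' : F' ⊆ Icc 0 1)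
    (h : ∀ s ∈ Icc (0:ℝ) 1, ∀ δ ∈ Ioc (0:ℝ) 1, ∀ ε,
      HasIntCover θ δ s ε F → HasIntCover θ δ s (C * ε) F') :
    upperIntDim θ F' ≤ upperIntDim θ F := by
  rw [upperIntDim_of_ne_zero hθ0.ne', upperIntDim_of_ne_zero hθ0.ne']
  refine csInf_le_csInf ⟨0, fun s hs => hs.1⟩
    ⟨2, zero_le_two, fun ε hε => exists_hasIntCover_of_subset_Icc hF hθ0 hθ1 one_lt_two hε⟩ ?_
  rintro s ⟨hs0, hs⟩
  refine ⟨hs0, fun ε hε => ?_⟩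
  rcases le_or_gt s 1 with hs1 | hs1
  · obtain ⟨δ₀, hδ₀, H⟩ := hs (ε / C) (by positivity)
    refine ⟨min δ₀ 1, by positivity, fun δ hδ0 hδ => ?_⟩
    have := h s ⟨hs0, hs1⟩ δ ⟨hδ0, hδ.trans (min_le_right _ _)⟩ _
      (H δ hδ0 (hδ.trans (min_le_left _ _)))
    rwa [mul_div_cancel₀ _ hC.ne'] at this
  · exact exists_hasIntCover_of_subset_Icc hF' hθ0 hθ1 hs1 hε

lemma lowerIntDim_le_of_hasIntCover (hθ0 : 0 < θ) (hθ1 : θ ≤ 1) (hC : 0 < C)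
    (hF : F ⊆ Icc 0 1) (hF' : F' ⊆ Icc 0 1)
    (h : ∀ s ∈ Icc (0:ℝ) 1, ∀ δ ∈ Ioc (0:ℝ) 1, ∀ ε,
      HasIntCover θ δ s ε F → HasIntCover θ δ s (C * ε) F') :
    lowerIntDim θ F' ≤ lowerIntDim θ F := by
  have hcoarse : ∀ {G : Set ℝ}, G ⊆ Icc 0 1 → ∀ {s}, 1 < s → ∀ ε > (0:ℝ), ∀ δ₀ > (0:ℝ),
      ∃ δ : ℝ, 0 < δ ∧ δ ≤ δ₀ ∧ HasIntCover θ δ s ε G := fun hG s hs ε hε δ₀ hδ₀ => by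
    obtain ⟨δ₁, hδ₁, H⟩ := exists_hasIntCover_of_subset_Icc hG hθ0 hθ1 hs hε
    exact ⟨min δ₀ δ₁, by positivity, min_le_left _ _, H _ (by positivity) (min_le_right _ _)⟩
  rw [lowerIntDim_of_ne_zero hθ0.ne', lowerIntDim_of_ne_zero hθ0.ne']
  refine csInf_le_csInf ⟨0, fun s hs => hs.1⟩ ⟨2, zero_le_two, hcoarse hF one_lt_two⟩ ?_
  rintro s ⟨hs0, hs⟩
  refine ⟨hs0, fun ε hε δ₀ hδ₀ => ?_⟩
  rcases le_or_gt s 1 with hs1 | hs1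
  · obtain ⟨δ, hδ0, hδ, H⟩ := hs (ε / C) (by positivity) (min δ₀ 1) (by positivity)
    have := h s ⟨hs0, hs1⟩ δ ⟨hδ0, hδ.trans (min_le_right _ _)⟩ _ H
    rw [mul_div_cancel₀ _ hC.ne'] at this
    exact ⟨δ, hδ0, hδ.trans (min_le_left _ _), this⟩
  · exact hcoarse hF' hs1 ε hε δ₀ hδ₀

end IntDim

lemma exists_finset_gaps_not_subset {ι κ : Type*} [Nonempty κ] {S : Set ι} {l r : ι → ℝ}
    {E : Set ℝ} (hdisj : S.PairwiseDisjoint fun k => Ioo (l k) (r k)) (hrE : ∀ k ∈ S, r k ∈ E)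
    {I : Finset κ} {J : κ → Set ℝ} (hJ : ∀ i ∈ I, (J i).OrdConnected)
    (hcov : E ⊆ ⋃ i ∈ I, J i) :
    ∃ K : Finset ι, ↑K ⊆ S ∧ K.card ≤ I.card ∧
      ∀ k ∈ S, k ∉ K → Ioo (l k) (r k) ⊆ ⋃ i ∈ I, J i := by
  classical
  set K := {k ∈ S | ¬ Ioo (l k) (r k) ⊆ ⋃ i ∈ I, J i}
  choose! idx hidxI hidxJ using fun k hk => mem_iUnion₂.1 (hcov (hrE k hk))
  -- if the right ends of two gaps lie in the same `J i`, then so does the later gap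
  have hinj : InjOn idx K := by
    intro p hp q hq hpq
    by_contra hne
    wlog h : r p ≤ r q generalizing p q
    · exact this hq hp hpq.symm (Ne.symm hne) (le_of_not_ge h)
    have hsep := Set.Ioo_disjoint_Ioo.1 (hdisj hp.1 hq.1 hne)
    rw [min_eq_left h, le_max_iff] at hsep
    rcases hsep with hsep | hsep
    · exact hp.2 (by simp [Ioo_eq_empty (not_lt.2 hsep)])
    · refine hq.2 ((Ioo_subset_Icc_self.trans (Icc_subset_Icc_left hsep)).trans ?_)
      exact ((hJ _ (hidxI q hq.1)).out (hpq ▸ hidxJ p hp.1) (hidxJ q hq.1)).trans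
        (subset_iUnion₂ (s := fun i _ => J i) _ (hidxI q hq.1))
  have hfin : K.Finite := Finite.of_injOn (fun k hk => hidxI k hk.1) hinj I.finite_toSet
  refine ⟨hfin.toFinset, fun k hk => (hfin.mem_toFinset.1 hk).1, ?_, fun k hk hkK => ?_⟩
  · exact Finset.card_le_card_of_injOn idx (fun k hk => hidxI k (hfin.mem_toFinset.1 hk).1)
      (hinj.mono fun k hk => hfin.mem_toFinset.1 hk)
  · by_contra h
    exact hkK (hfin.mem_toFinset.2 ⟨hk, h⟩)

section ComplSet

variable {a g : ℕ → ℝ}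

lemma gap_bounds (hpos : ∀ n ≥ 1, 0 < a n)
    (hg1 : ∀ n ≥ 1, Ioo (g n) (g n + a n) ⊆ Icc 0 1) {n : ℕ} (hn : 1 ≤ n) :
    0 ≤ g n ∧ g n + a n ≤ 1 := by
  have hlt : g n < g n + a n := by linarith [hpos n hn]
  refine (Icc_subset_Icc_iff hlt.le).1 ?_
  rw [← closure_Ioo hlt.ne]
  exact closure_minimal (hg1 n hn) isClosed_Icc

lemma gap_right_mem (hpos : ∀ n ≥ 1, 0 < a n)
    (hg1 : ∀ n ≥ 1, Ioo (g n) (g n + a n) ⊆ Icc 0 1)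
    (hg2 : ∀ m ≥ 1, ∀ n ≥ 1, m ≠ n →
      Disjoint (Ioo (g m) (g m + a m)) (Ioo (g n) (g n + a n)))
    {n : ℕ} (hn : 1 ≤ n) :
    g n + a n ∈ Icc 0 1 \ ⋃ m ∈ {k : ℕ | 1 ≤ k}, Ioo (g m) (g m + a m) := by
  obtain ⟨hg0, hg1n⟩ := gap_bounds hpos hg1 hn
  refine ⟨⟨by linarith [hpos n hn], hg1n⟩, fun hmem => ?_⟩
  obtain ⟨m, hm, hxm⟩ := mem_iUnion₂.1 hmem
  have hmn : m ≠ n := by rintro rfl; exact hxm.2.false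
  have := Set.Ioo_disjoint_Ioo.1 (hg2 m hm n hn hmn)
  rw [min_eq_right hxm.2.le] at this
  exact (max_lt hxm.1 (lt_add_of_pos_right _ (hpos n hn))).not_ge this

end ComplSet

namespace IsComplSet

variable {a : ℕ → ℝ} {E : Set ℝ}

lemma subset_Icc (hE : IsComplSet a E) : E ⊆ Icc 0 1 := by
  obtain ⟨g, -, -, rfl⟩ := hE
  exact sdiff_subset

lemma nonempty (hpos : ∀ n ≥ 1, 0 < a n) (hE : IsComplSet a E) : E.Nonempty := by
  obtain ⟨g, hg1, hg2, rfl⟩ := hE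
  exact ⟨_, gap_right_mem hpos hg1 hg2 le_rfl⟩

lemma exists_one_le_sum_diam_add_sum (hpos : ∀ n ≥ 1, 0 < a n) (hE : IsComplSet a E)
    {I : Finset ℕ} {U : ℕ → Set ℝ} (hcov : E ⊆ ⋃ i ∈ I, U i)
    (hU : ∀ i ∈ I, Bornology.IsBounded (U i)) :
    ∃ K : Finset ℕ, (∀ k ∈ K, 1 ≤ k) ∧ K.card ≤ I.card ∧
      1 ≤ ∑ i ∈ I, diam (U i) + ∑ k ∈ K, a k := by
  obtain ⟨g, hg1, hg2, rfl⟩ := hE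
  set W := ⋃ i ∈ I, convexHull ℝ (U i)
  have hcovW : Icc 0 1 \ ⋃ n ∈ {k : ℕ | 1 ≤ k}, Ioo (g n) (g n + a n) ⊆ W :=
    hcov.trans (iUnion₂_mono fun i _ => subset_convexHull ℝ _)
  obtain ⟨K, hKS, hKcard, hK⟩ := exists_finset_gaps_not_subset (S := {k | 1 ≤ k})
    hg2 (fun k hk => gap_right_mem hpos hg1 hg2 hk)
    (fun i _ => (convex_convexHull ℝ (U i)).ordConnected) hcovW
  refine ⟨K, hKS, hKcard, ?_⟩
  have hsub : Icc (0:ℝ) 1 ⊆ W ∪ ⋃ k ∈ K, Ioo (g k) (g k + a k) := by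
    intro x hx
    by_contra hxWK
    obtain ⟨hxW, hxK⟩ := not_or.1 hxWK
    obtain ⟨k, hk, hxk⟩ := mem_iUnion₂.1 (not_not.1 fun h => hxW (hcovW ⟨hx, h⟩))
    by_cases hkK : k ∈ K
    · exact hxK (mem_iUnion₂.2 ⟨k, hkK, hxk⟩)
    · exact hxW (hK k hk hkK hxk)
  have hhull : ∀ i ∈ I, volume (convexHull ℝ (U i)) ≤ ENNReal.ofReal (diam (U i)) :=
    fun i hi => by
      rw [diam, ENNReal.ofReal_toReal (hU i hi).ediam_ne_top, ← convexHull_ediam]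
      exact Real.volume_le_diam _
  have hdiam0 : 0 ≤ ∑ i ∈ I, diam (U i) := Finset.sum_nonneg fun _ _ => diam_nonneg
  have ha0 : 0 ≤ ∑ k ∈ K, a k := Finset.sum_nonneg fun k hk => (hpos k (hKS hk)).le
  have hvol : volume (Icc (0:ℝ) 1) ≤ ENNReal.ofReal (∑ i ∈ I, diam (U i) + ∑ k ∈ K, a k) := by
    rw [ENNReal.ofReal_add hdiam0 ha0, ENNReal.ofReal_sum_of_nonneg fun _ _ => diam_nonneg,
      ENNReal.ofReal_sum_of_nonneg fun k hk => (hpos k (hKS hk)).le]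
    calc volume (Icc (0:ℝ) 1)
        ≤ volume W + volume (⋃ k ∈ K, Ioo (g k) (g k + a k)) :=
          (measure_mono hsub).trans (measure_union_le _ _)
      _ ≤ ∑ i ∈ I, volume (convexHull ℝ (U i)) + ∑ k ∈ K, volume (Ioo (g k) (g k + a k)) :=
          add_le_add (measure_biUnion_finset_le _ _) (measure_biUnion_finset_le _ _)
      _ ≤ _ := add_le_add (Finset.sum_le_sum hhull) (by simp [Real.volume_Ioo])
  rwa [Real.volume_Icc, sub_zero, ENNReal.ofReal_le_ofReal_iff (add_nonneg hdiam0 ha0)] at hvol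

lemma xseq_le_sum_diam (hpos : ∀ n ≥ 1, 0 < a n) (hmono : ∀ n ≥ 1, a (n + 1) ≤ a n)
    (hsumm : Summable fun n => a (n + 1)) (htot : ∑' n : ℕ, a (n + 1) = 1)
    (hE : IsComplSet a E) {I : Finset ℕ} {U : ℕ → Set ℝ} (hcov : E ⊆ ⋃ i ∈ I, U i)
    (hU : ∀ i ∈ I, Bornology.IsBounded (U i)) :
    xseq a (I.card + 1) ≤ ∑ i ∈ I, diam (U i) := by
  obtain ⟨K, hK1, hKcard, hcover⟩ := hE.exists_one_le_sum_diam_add_sum hpos hcov hU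
  have hKsum : ∑ k ∈ K, a k ≤ ∑ i ∈ Finset.range I.card, a (i + 1) :=
    (sum_le_sum_range_card (antitoneOn_nat_Ici_of_succ_le hmono) hK1).trans
      (Finset.sum_le_sum_of_subset_of_nonneg (Finset.range_mono hKcard)
        fun i _ _ => (hpos (i + 1) (by omega)).le)
  linarith [sum_range_add_xseq hsumm htot I.card]

end IsComplSet

lemma Da_subset_image_union_Icc {a : ℕ → ℝ} (hpos : ∀ n ≥ 1, 0 < a n)
    (hsumm : Summable fun n => a (n + 1)) (htot : ∑' n : ℕ, a (n + 1) = 1) (N : ℕ) :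
    Da a ⊆ xseq a '' ↑(Finset.Icc 1 N) ∪ Icc 0 (xseq a (N + 1)) := by
  rintro y (rfl | ⟨k, hk, rfl⟩)
  · exact Or.inr ⟨le_rfl, xseq_nonneg hpos (by omega)⟩
  · by_cases hkN : k ≤ N
    · exact Or.inl ⟨k, by simp [hk, hkN], rfl⟩
    · obtain ⟨j, rfl⟩ := Nat.exists_eq_add_of_le' hk
      exact Or.inr ⟨xseq_nonneg hpos hk, xseq_succ_le_xseq_succ hpos hsumm htot (by omega)⟩

lemma mul_rpow_sub_one_le_rpow {d D s : ℝ} (hd : 0 < d) (hdD : d ≤ D) (hs : s ≤ 1) :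
    d * D ^ (s - 1) ≤ d ^ s := by
  calc d * D ^ (s - 1) ≤ d * d ^ (s - 1) :=
        mul_le_mul_of_nonneg_left (Real.rpow_le_rpow_of_nonpos hd hdD (by linarith)) hd.le
    _ = d ^ s := by rw [Real.rpow_sub_one hd.ne', mul_div_cancel₀ _ hd.ne']

lemma IsComplSet.hasIntCover_Da {a : ℕ → ℝ} {E : Set ℝ} (hpos : ∀ n ≥ 1, 0 < a n)
    (hmono : ∀ n ≥ 1, a (n + 1) ≤ a n) (hsumm : Summable fun n => a (n + 1))
    (htot : ∑' n : ℕ, a (n + 1) = 1) (hE : IsComplSet a E) {θ s δ ε : ℝ}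
    (hθ0 : 0 < θ) (hθ1 : θ ≤ 1) (hs0 : 0 ≤ s) (hs1 : s ≤ 1) (hδ0 : 0 < δ) (hδ1 : δ ≤ 1)
    (h : HasIntCover θ δ s ε E) : HasIntCover θ δ s (3 * ε) (Da a) := by
  obtain ⟨I, U, hcov, hdiam, hsum⟩ := h
  have hδ' : 0 < δ ^ (1 / θ) := Real.rpow_pos_of_pos hδ0 _
  have hdpos : ∀ i ∈ I, 0 < diam (U i) := fun i hi => hδ'.trans_le (hdiam i hi).1
  have hbdd : ∀ i ∈ I, Bornology.IsBounded (U i) := fun i hi => by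
    by_contra hU
    exact (hdpos i hi).ne' (diam_eq_zero_of_unbounded hU)
  have hI : I.Nonempty := by
    obtain ⟨x, hx⟩ := hE.nonempty hpos
    obtain ⟨i, hi, -⟩ := mem_iUnion₂.1 (hcov hx)
    exact ⟨i, hi⟩
  obtain ⟨i₀, hi₀, hmax⟩ := I.exists_max_image (fun i => diam (U i)) hI
  set D := diam (U i₀)
  set L := xseq a (I.card + 1)
  have hD0 : 0 < D := hdpos i₀ hi₀
  have hpoints : I.card * (δ ^ (1 / θ)) ^ s ≤ ε := by
    rw [← nsmul_eq_mul]
    exact (Finset.card_nsmul_le_sum _ _ _ fun i hi =>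
      Real.rpow_le_rpow hδ'.le (hdiam i hi).1 hs0).trans hsum
  have hD : D ^ s ≤ ε :=
    (Finset.single_le_sum (fun i _ => Real.rpow_nonneg diam_nonneg s) hi₀).trans hsum
  have hL : L * D ^ (s - 1) ≤ ε :=
    calc L * D ^ (s - 1) ≤ (∑ i ∈ I, diam (U i)) * D ^ (s - 1) :=
          mul_le_mul_of_nonneg_right (hE.xseq_le_sum_diam hpos hmono hsumm htot hcov hbdd)
            (Real.rpow_nonneg hD0.le _)
      _ ≤ ∑ i ∈ I, diam (U i) ^ s := by
          rw [Finset.sum_mul]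
          exact Finset.sum_le_sum fun i hi => mul_rpow_sub_one_le_rpow (hdpos i hi) (hmax i hi) hs1
      _ ≤ ε := hsum
  have hcost : (L / D + 1) * D ^ s = L * D ^ (s - 1) + D ^ s := by
    rw [Real.rpow_sub_one hD0.ne']
    ring
  refine ((hasIntCover_image (xseq a) (Finset.Icc 1 I.card) hδ'.le le_rfl
    (rpow_one_div_le_self hθ0 hθ1 hδ0 hδ1)).union (hasIntCover_Icc_zero
      (xseq_nonneg hpos (by omega)) hD0 (hdiam i₀ hi₀).1 (hdiam i₀ hi₀).2)).mono
    (Da_subset_image_union_Icc hpos hsumm htot _) ?_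
  rw [Nat.card_Icc, Nat.add_sub_cancel, hcost]
  linarith

/-- For every complementary set `E ∈ 𝒞_a` and every `θ ∈ [0,1]`:
`dim_θ D_a ≤ dim_θ E` for both upper and lower θ-intermediate dimensions. -/
theorem Da_minimal (a : ℕ → ℝ) (hpos : ∀ n ≥ 1, 0 < a n) (hmono : ∀ n ≥ 1, a (n + 1) ≤ a n)
    (hsumm : Summable fun n => a (n + 1)) (htot : ∑' n : ℕ, a (n + 1) = 1)
    (E : Set ℝ) (hE : IsComplSet a E) :
    ∀ θ ∈ Set.Icc (0:ℝ) 1,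
      upperIntDim θ (Da a) ≤ upperIntDim θ E ∧
      lowerIntDim θ (Da a) ≤ lowerIntDim θ E := by
  rintro θ ⟨hθ0, hθ1⟩
  rcases hθ0.eq_or_lt with rfl | hθ0
  · have hDa : (dimH (Da a)).toReal = 0 := by rw [dimH_countable (Da_countable a)]; rfl
    simp only [upperIntDim, lowerIntDim, if_pos, hDa]
    exact ⟨ENNReal.toReal_nonneg, ENNReal.toReal_nonneg⟩
  have htransfer : ∀ s ∈ Icc (0:ℝ) 1, ∀ δ ∈ Ioc (0:ℝ) 1, ∀ ε,
      HasIntCover θ δ s ε E → HasIntCover θ δ s (3 * ε) (Da a) :=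
    fun s hs δ hδ ε => hE.hasIntCover_Da hpos hmono hsumm htot hθ0 hθ1 hs.1 hs.2 hδ.1 hδ.2
  have hDa := Da_subset_Icc hpos hsumm htot
  exact ⟨upperIntDim_le_of_hasIntCover hθ0 hθ1 three_pos hE.subset_Icc hDa htransfer,
    lowerIntDim_le_of_hasIntCover hθ0 hθ1 three_pos hE.subset_Icc hDa htransfer⟩
end

section
/- Let a = {a_n} be positive non-increasing with ∑ a_n = 1, doubling (a_n ≤ c·a_{2n}), and let s > 1. Define a subsequence b of a by the block construction b_{2^k+i} := a_{2^{j(k)+1}+i} (with offset corrections when j(k) repeats), where j(k) is chosen so that a_{2^{j(k)+1}} < (a_{2^k})^s ≤ a_{2^{j(k)}} and j(k) ≥ k. Then there exists c' > 0 such that c'^{-1}(a_{2^k})^s ≤ b_{2^k+i} ≤ c'(a_{2^k})^s for all k ≥ 1 and 0 ≤ i < 2^k. -/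
open Filter Set Topology

/-!
Since `k ≤ j(k)`, the offset `∑_{r=1}^{m_k} 2^{k-r} + i` is less than `2^{k+1} ≤ 2^{j(k)+1}`,
so every index of the `k`-th block lies in the dyadic block `[2^{j(k)+1}, 2^{j(k)+2})`.
Monotonicity bounds `b_{2^k+i}` above by `a_{2^{j(k)+1}} < (a_{2^k})^s`, and applying the
doubling condition twice bounds it below by `c⁻² a_{2^{j(k)}} ≥ c⁻² (a_{2^k})^s`; so `c' = c²`.
-/

lemma sum_Icc_two_pow_sub_add_two_pow_sub {m k : ℕ} (hmk : m ≤ k) :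
    ∑ r ∈ Finset.Icc 1 m, 2 ^ (k - r) + 2 ^ (k - m) = 2 ^ k := by
  induction m with
  | zero => simp
  | succ n ih =>
    rw [Finset.sum_Icc_succ_top (by omega)]
    have h := ih (by omega)
    rw [show k - n = k - (n + 1) + 1 by omega, pow_succ] at h
    omega

lemma sum_Icc_two_pow_sub_lt {m k : ℕ} (hmk : m ≤ k) :
    ∑ r ∈ Finset.Icc 1 m, 2 ^ (k - r) < 2 ^ k := by
  have := sum_Icc_two_pow_sub_add_two_pow_sub hmk
  have := Nat.two_pow_pos (k - m)
  omega

section Doubling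

variable {a : ℕ → ℝ} {c : ℝ}

lemma antitoneOn_Ici_one_of_succ_le (hmono : ∀ n ≥ 1, a (n + 1) ≤ a n) :
    AntitoneOn a (Ici 1) :=
  antitoneOn_of_add_one_le ordConnected_Ici fun n _ hn _ ↦ hmono n hn

lemma one_le_of_doubling (h2 : 0 < a 2) (h21 : a 2 ≤ a 1) (hdoub : a 1 ≤ c * a 2) : 1 ≤ c := by
  nlinarith

lemma le_pow_mul_of_doubling (hc : 0 ≤ c) (hdoub : ∀ n ≥ 1, a n ≤ c * a (2 * n))
    {n : ℕ} (hn : 1 ≤ n) (p : ℕ) : a n ≤ c ^ p * a (2 ^ p * n) := by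
  induction p with
  | zero => simp
  | succ p ih =>
    calc a n ≤ c ^ p * a (2 ^ p * n) := ih
      _ ≤ c ^ p * (c * a (2 * (2 ^ p * n))) :=
        mul_le_mul_of_nonneg_left (hdoub _ (one_le_mul Nat.one_le_two_pow hn)) (by positivity)
      _ = c ^ (p + 1) * a (2 ^ (p + 1) * n) := by ring_nf

lemma le_sq_mul_and_lt_of_mem_dyadic_block (hmono : ∀ n ≥ 1, a (n + 1) ≤ a n) (hc : 0 ≤ c)
    (hdoub : ∀ n ≥ 1, a n ≤ c * a (2 * n)) {A : ℝ} {j N : ℕ}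
    (hlt : a (2 ^ (j + 1)) < A) (hle : A ≤ a (2 ^ j))
    (hN₁ : 2 ^ (j + 1) ≤ N) (hN₂ : N ≤ 2 ^ (j + 2)) :
    A ≤ c ^ 2 * a N ∧ a N < A := by
  have hanti := antitoneOn_Ici_one_of_succ_le hmono
  have hone : 1 ≤ N := le_trans Nat.one_le_two_pow hN₁
  constructor
  · calc A ≤ a (2 ^ j) := hle
      _ ≤ c ^ 2 * a (2 ^ 2 * 2 ^ j) := le_pow_mul_of_doubling hc hdoub Nat.one_le_two_pow 2
      _ = c ^ 2 * a (2 ^ (j + 2)) := by rw [← pow_add, add_comm]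
      _ ≤ c ^ 2 * a N :=
        mul_le_mul_of_nonneg_left (hanti hone Nat.one_le_two_pow hN₂) (by positivity)
  · exact lt_of_le_of_lt (hanti Nat.one_le_two_pow hone hN₁) hlt

end Doubling

theorem block_subsequence_comparable_general (a : ℕ → ℝ) (hpos : ∀ n ≥ 1, 0 < a n) (hmono : ∀ n ≥ 1, a (n + 1) ≤ a n)
    (c : ℝ) (hdoub : ∀ n ≥ 1, a n ≤ c * a (2 * n))
    (s : ℝ)
    (j : ℕ → ℕ)
    (hj : ∀ k ≥ 1, k ≤ j k ∧
      a (2 ^ (j k + 1)) < a (2 ^ k) ^ s ∧ a (2 ^ k) ^ s ≤ a (2 ^ (j k)))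
    (m : ℕ → ℕ)
    (hm : ∀ k ≥ 1, m k ≤ k - 1 ∧ (∀ r ≤ m k, j (k - r) = j k) ∧
      (m k + 1 ≤ k - 1 → j (k - (m k + 1)) ≠ j k))
    (b : ℕ → ℝ)
    (hb : ∀ k ≥ 1, ∀ i < 2 ^ k,
      b (2 ^ k + i) = a (2 ^ (j k + 1) + (∑ r ∈ Finset.Icc 1 (m k), 2 ^ (k - r)) + i)) :
    ∃ c' > (0:ℝ), ∀ k ≥ 1, ∀ i < 2 ^ k,
      c'⁻¹ * a (2 ^ k) ^ s ≤ b (2 ^ k + i) ∧ b (2 ^ k + i) ≤ c' * a (2 ^ k) ^ s := by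
  have hc : 1 ≤ c := one_le_of_doubling (hpos 2 (by norm_num))
    (antitoneOn_Ici_one_of_succ_le hmono (le_refl 1) (by simp) (by norm_num)) (hdoub 1 le_rfl)
  refine ⟨c ^ 2, by positivity, fun k hk i hi ↦ ?_⟩
  obtain ⟨hkj, hlt, hle⟩ := hj k hk
  have hoffset := sum_Icc_two_pow_sub_lt (show m k ≤ k by have := (hm k hk).1; omega)
  have hblock : 2 ^ k + 2 ^ k ≤ 2 ^ (j k + 1) := by
    rw [← two_mul, ← pow_succ']
    exact Nat.pow_le_pow_right two_pos (by omega)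
  obtain ⟨hlower, hupper⟩ := le_sq_mul_and_lt_of_mem_dyadic_block hmono (by positivity) hdoub
    hlt hle (N := 2 ^ (j k + 1) + ∑ r ∈ Finset.Icc 1 (m k), 2 ^ (k - r) + i)
    (by omega) (by rw [pow_succ (2 : ℕ) (j k + 1)]; omega)
  rw [hb k hk i hi, inv_mul_le_iff₀ (by positivity)]
  have hA : 0 < a (2 ^ k) ^ s := Real.rpow_pos_of_pos (hpos _ Nat.one_le_two_pow) s
  exact ⟨hlower, hupper.le.trans (le_mul_of_one_le_left hA.le (one_le_pow₀ hc))⟩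

/-- The blockwise subsequence `b` built from a doubling sequence `a` via the indices
`j(k)` (with `a_{2^{j(k)+1}} < (a_{2^k})^s ≤ a_{2^{j(k)}}`, `j(k) ≥ k`) satisfies
`b_{2^k+i} ≍ (a_{2^k})^s` uniformly. Here `m k` is the largest `m ≤ k-1` with
`j(k) = j(k-1) = ⋯ = j(k-m)`, and
`b_{2^k+i} = a_{2^{j(k)+1} + ∑_{r=1}^{m k} 2^{k-r} + i}`. -/
theorem block_subsequence_comparable (a : ℕ → ℝ) (hpos : ∀ n ≥ 1, 0 < a n) (hmono : ∀ n ≥ 1, a (n + 1) ≤ a n)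
    (hsumm : Summable fun n => a (n + 1)) (htot : ∑' n : ℕ, a (n + 1) = 1)
    (c : ℝ) (hc : 0 < c) (hdoub : ∀ n ≥ 1, a n ≤ c * a (2 * n))
    (s : ℝ) (hs : 1 < s)
    (j : ℕ → ℕ) (hj0 : j 0 = 0)
    (hj : ∀ k ≥ 1, k ≤ j k ∧
      a (2 ^ (j k + 1)) < a (2 ^ k) ^ s ∧ a (2 ^ k) ^ s ≤ a (2 ^ (j k)))
    (m : ℕ → ℕ)
    (hm : ∀ k ≥ 1, m k ≤ k - 1 ∧ (∀ r ≤ m k, j (k - r) = j k) ∧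
      (m k + 1 ≤ k - 1 → j (k - (m k + 1)) ≠ j k))
    (b : ℕ → ℝ)
    (hb : ∀ k ≥ 1, ∀ i < 2 ^ k,
      b (2 ^ k + i) = a (2 ^ (j k + 1) + (∑ r ∈ Finset.Icc 1 (m k), 2 ^ (k - r)) + i)) :
    ∃ c' > (0:ℝ), ∀ k ≥ 1, ∀ i < 2 ^ k,
      c'⁻¹ * a (2 ^ k) ^ s ≤ b (2 ^ k + i) ∧ b (2 ^ k + i) ≤ c' * a (2 ^ k) ^ s :=
  block_subsequence_comparable_general a hpos hmono c hdoub s j hj m hm b hb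
end
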